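/- Let (Ω, F, P) be a probability space, p ∈ [1, ∞), and let ρ1, ρ2 : L^p(Ω, F, P) → ℝ be functionals continuous with respect to the L^p norm. For Z ∈ L^p define V(Z) := inf_{f ∈ A^0_Lip} [ρ1(f(Z)) + ρ2(Z − f(Z))]. Let (Z_n)_{n≥1}, Z ∈ L^p with ‖Z_n − Z‖_p → 0, and let f̂_n ∈ A^0_Lip satisfy ρ1(f̂_n(Z_n)) + ρ2(Z_n − f̂_n(Z_n)) = V(Z_n) for every n. If f̂_n → g uniformly on every compact subset of ℝ for some function g : ℝ → ℝ, then g ∈ A^0_Lip and ρ1(g(Z)) + ρ2(Z − g(Z)) = V(Z); that is, every locally uniform limit point of the minimizers for Z_n is a minimizer for Z. -/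

import Mathlib

open MeasureTheory Filter Topology
open scoped ENNReal NNReal

/-- The set `A⁰_Lip` of normalized Lipschitz allocations. -/
def IsA0Lip (f : ℝ → ℝ) : Prop :=
  f 0 = 0 ∧ LipschitzWith 1 f ∧ LipschitzWith 1 (fun x => x - f x)

/-- Sequential continuity of a functional with respect to the `L^p` norm. -/
def LpSeqContinuous {Ω : Type*} [MeasurableSpace Ω] (μ : MeasureTheory.Measure Ω)
    (p : ℝ≥0∞) (ρ : (Ω → ℝ) → ℝ) : Prop :=
  ∀ (Y : ℕ → Ω → ℝ) (Z : Ω → ℝ), (∀ n, MemLp (Y n) p μ) → MemLp Z p μ →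
    Filter.Tendsto (fun n => eLpNorm (Y n - Z) p μ) Filter.atTop (nhds 0) →
    Filter.Tendsto (fun n => ρ (Y n)) Filter.atTop (nhds (ρ Z))

/-- The value function `V(Z) = inf_{f ∈ A⁰_Lip} [ρ1(f(Z)) + ρ2(Z - f(Z))]`. -/
noncomputable def riskSharingValue {Ω : Type*} [MeasurableSpace Ω]
    (ρ1 ρ2 : (Ω → ℝ) → ℝ) (Z : Ω → ℝ) : ℝ :=
  sInf {r : ℝ | ∃ f : ℝ → ℝ, IsA0Lip f ∧
    r = ρ1 (fun ω => f (Z ω)) + ρ2 (fun ω => Z ω - f (Z ω))}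

/-! The minimizers converge pointwise, and `A⁰_Lip` is closed under pointwise limits, so
`g ∈ A⁰_Lip`. If `fₙ ∈ A⁰_Lip` converge pointwise to `f` and `Zₙ → Z` in `L^p`, then
`fₙ(Zₙ) → f(Z)` in `L^p`: the error `fₙ(Zₙ) - fₙ(Z)` is bounded by `|Zₙ - Z|`, and
`fₙ(Z) → f(Z)` by dominated convergence with dominating function `|Z|`. Hence the costs
`ρ1(fₙ(Zₙ)) + ρ2(Zₙ - fₙ(Zₙ))` converge, and passing to the limit in `V(Zₙ) ≤ cost(f, Zₙ)` shows
that `g` is a minimizer for `Z`.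

That last inequality needs the costs to be bounded below on `A⁰_Lip` (otherwise `sInf` is the
junk value `0`). This holds because `A⁰_Lip` is sequentially compact for pointwise convergence:
an unbounded-below sequence of costs would have a subsequence converging to a finite cost. -/

section LpConvergence

variable {Ω E G : Type*} [MeasurableSpace Ω] {μ : Measure Ω} {p : ℝ≥0∞}
  [NormedAddCommGroup E] [NormedAddCommGroup G]

theorem unifIntegrable_of_norm_le {ι : Type*} (hp : 1 ≤ p) (hp' : p ≠ ∞) {f : ι → Ω → E}
    {b : Ω → ℝ} (hb : MemLp b p μ) (hle : ∀ i ω, ‖f i ω‖ ≤ b ω) : UnifIntegrable f p μ := by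
  intro ε hε
  obtain ⟨δ, hδ, h⟩ := hb.eLpNorm_indicator_le hp hp' hε
  refine ⟨δ, hδ, fun i s hs hμs => (eLpNorm_mono_real fun ω => ?_).trans (h s hs hμs)⟩
  by_cases hω : ω ∈ s
  · simpa [hω] using hle i ω
  · simp [hω]

variable {K : ℝ≥0} {F : ℕ → E → G} {g : E → G}

theorem lipschitzWith_of_tendsto (hF : ∀ n, LipschitzWith K (F n))
    (h : ∀ x, Tendsto (F · x) atTop (𝓝 (g x))) : LipschitzWith K g :=
  (isClosed_setOfPred_lipschitzWith K).mem_of_tendsto (tendsto_pi_nhds.2 h) (.of_forall hF)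

theorem tendsto_eLpNorm_comp_sub_comp [IsFiniteMeasure μ] (hp : 1 ≤ p) (hp' : p ≠ ∞)
    (hF : ∀ n, LipschitzWith K (F n)) (hF0 : ∀ n, F n 0 = 0)
    (h : ∀ x, Tendsto (F · x) atTop (𝓝 (g x))) {X : Ω → E} (hX : MemLp X p μ) :
    Tendsto (fun n => eLpNorm (F n ∘ X - g ∘ X) p μ) atTop (𝓝 0) := by
  have hg0 : g 0 = 0 := tendsto_nhds_unique (h 0) (by simp [hF0])
  have hdom : ∀ n ω, ‖(F n ∘ X) ω‖ ≤ K * ‖X ω‖ := fun n ω => by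
    simpa [hF0] using (hF n).norm_sub_le (X ω) 0
  exact tendsto_Lp_finite_of_tendsto_ae hp hp'
    (fun n => (hF n).continuous.comp_aestronglyMeasurable hX.1)
    ((lipschitzWith_of_tendsto hF h).comp_memLp hg0 hX)
    (unifIntegrable_of_norm_le hp hp' (hX.norm.const_mul _) hdom)
    (.of_forall fun ω => h (X ω))

theorem tendsto_eLpNorm_comp_sub_comp_of_tendsto [IsFiniteMeasure μ] (hp : 1 ≤ p) (hp' : p ≠ ∞)
    (hF : ∀ n, LipschitzWith K (F n)) (hF0 : ∀ n, F n 0 = 0)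
    (h : ∀ x, Tendsto (F · x) atTop (𝓝 (g x))) {X : ℕ → Ω → E} {Y : Ω → E}
    (hX : ∀ n, AEStronglyMeasurable (X n) μ) (hY : MemLp Y p μ)
    (hXY : Tendsto (fun n => eLpNorm (X n - Y) p μ) atTop (𝓝 0)) :
    Tendsto (fun n => eLpNorm (F n ∘ X n - g ∘ Y) p μ) atTop (𝓝 0) := by
  have hg := lipschitzWith_of_tendsto hF h
  have hle : ∀ n, eLpNorm (F n ∘ X n - g ∘ Y) p μ ≤
      K * eLpNorm (X n - Y) p μ + eLpNorm (F n ∘ Y - g ∘ Y) p μ := fun n =>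
    calc eLpNorm (F n ∘ X n - g ∘ Y) p μ
        = eLpNorm ((F n ∘ X n - F n ∘ Y) + (F n ∘ Y - g ∘ Y)) p μ := by
          rw [sub_add_sub_cancel]
      _ ≤ eLpNorm (F n ∘ X n - F n ∘ Y) p μ + eLpNorm (F n ∘ Y - g ∘ Y) p μ :=
          eLpNorm_add_le
            (((hF n).continuous.comp_aestronglyMeasurable (hX n)).sub
              ((hF n).continuous.comp_aestronglyMeasurable hY.1))
            (((hF n).continuous.comp_aestronglyMeasurable hY.1).sub
              (hg.continuous.comp_aestronglyMeasurable hY.1)) hp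
      _ ≤ K * eLpNorm (X n - Y) p μ + eLpNorm (F n ∘ Y - g ∘ Y) p μ := by
          gcongr
          refine eLpNorm_le_nnreal_smul_eLpNorm_of_ae_le_mul' (.of_forall fun ω => ?_) p
          simpa [edist_eq_enorm_sub] using (hF n).edist_le_mul (X n ω) (Y ω)
  have hbound : Tendsto (fun n => K * eLpNorm (X n - Y) p μ + eLpNorm (F n ∘ Y - g ∘ Y) p μ)
      atTop (𝓝 0) := by
    simpa using (ENNReal.Tendsto.const_mul hXY (.inr ENNReal.coe_ne_top)).add
      (tendsto_eLpNorm_comp_sub_comp hp hp' hF hF0 h hY)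
  exact tendsto_of_tendsto_of_tendsto_of_le_of_le tendsto_const_nhds hbound (fun _ => zero_le) hle

end LpConvergence

namespace IsA0Lip

theorem abs_le {f : ℝ → ℝ} (hf : IsA0Lip f) (x : ℝ) : |f x| ≤ |x| := by
  simpa [hf.1] using hf.2.1.dist_le_mul x 0

theorem id_sub {f : ℝ → ℝ} (hf : IsA0Lip f) : IsA0Lip (fun x => x - f x) :=
  ⟨by simp [hf.1], hf.2.2, by simpa only [sub_sub_cancel] using hf.2.1⟩

end IsA0Lip

theorem isClosed_setOf_isA0Lip : IsClosed {f : ℝ → ℝ | IsA0Lip f} :=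
  (isClosed_eq (continuous_apply 0) continuous_const).inter <|
    (isClosed_setOfPred_lipschitzWith 1).inter <|
      (isClosed_setOfPred_lipschitzWith 1).preimage (by fun_prop)

theorem isCompact_setOf_isA0Lip : IsCompact {f : ℝ → ℝ | IsA0Lip f} :=
  (isCompact_univ_pi fun x => isCompact_Icc (a := -|x|) (b := |x|)).of_isClosed_subset
    isClosed_setOf_isA0Lip fun _ hf x _ => abs_le.1 (hf.abs_le x)

theorem IsA0Lip.of_tendsto {F : ℕ → ℝ → ℝ} {g : ℝ → ℝ} (hF : ∀ n, IsA0Lip (F n))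
    (h : ∀ x, Tendsto (F · x) atTop (𝓝 (g x))) : IsA0Lip g :=
  isClosed_setOf_isA0Lip.mem_of_tendsto (tendsto_pi_nhds.2 h) (.of_forall hF)

theorem IsA0Lip.exists_subseq_tendsto {F : ℕ → ℝ → ℝ} (hF : ∀ n, IsA0Lip (F n)) :
    ∃ g, IsA0Lip g ∧ ∃ φ : ℕ → ℕ, StrictMono φ ∧
      ∀ x, Tendsto (fun k => F (φ k) x) atTop (𝓝 (g x)) := by
  -- `ℝ → ℝ` is not first countable but `ℚ → ℝ` is metrizable, so extract the subsequence on `ℚ`;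
  -- equicontinuity then carries the convergence from the dense set `ℚ` to all of `ℝ`.
  let restrictRat : (ℝ → ℝ) → (ℚ → ℝ) := fun f q => f q
  obtain ⟨_, ⟨g, hg, rfl⟩, φ, hφ, hlim⟩ :=
    (isCompact_setOf_isA0Lip.image (by fun_prop : Continuous restrictRat)).tendsto_subseq
      fun n => Set.mem_image_of_mem restrictRat (hF n)
  refine ⟨g, hg, φ, hφ, fun x => ?_⟩
  have hclosed : IsClosed {x | Tendsto (fun k => F (φ k) x) atTop (𝓝 (g x))} :=
    (LipschitzWith.uniformEquicontinuous _ 1 fun k => (hF (φ k)).2.1).equicontinuous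
      |>.isClosed_setOfPred_tendsto hg.2.1.continuous
  exact hclosed.closure_subset_iff.2 (Set.range_subset_iff.2 (tendsto_pi_nhds.1 hlim))
    (Rat.denseRange_cast x)

section RiskSharing

variable {Ω : Type*} [MeasurableSpace Ω] {μ : Measure Ω} {p : ℝ≥0∞} {ρ1 ρ2 : (Ω → ℝ) → ℝ}

def allocationCost (ρ1 ρ2 : (Ω → ℝ) → ℝ) (Z : Ω → ℝ) (f : ℝ → ℝ) : ℝ :=
  ρ1 (fun ω => f (Z ω)) + ρ2 (fun ω => Z ω - f (Z ω))

theorem riskSharingValue_eq_sInf (ρ1 ρ2 : (Ω → ℝ) → ℝ) (Z : Ω → ℝ) :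
    riskSharingValue ρ1 ρ2 Z = sInf (allocationCost ρ1 ρ2 Z '' {f | IsA0Lip f}) := by
  simp only [riskSharingValue, allocationCost, Set.image, Set.mem_ofPred_eq, eq_comm]

theorem LpSeqContinuous.tendsto_comp [IsFiniteMeasure μ] (hp : 1 ≤ p) (hp' : p ≠ ∞)
    {ρ : (Ω → ℝ) → ℝ} (hρ : LpSeqContinuous μ p ρ)
    {Z : ℕ → Ω → ℝ} {Zlim : Ω → ℝ} (hZn : ∀ n, MemLp (Z n) p μ) (hZ : MemLp Zlim p μ)
    (hZconv : Tendsto (fun n => eLpNorm (Z n - Zlim) p μ) atTop (𝓝 0))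
    {F : ℕ → ℝ → ℝ} {g : ℝ → ℝ} (hF : ∀ n, IsA0Lip (F n))
    (h : ∀ x, Tendsto (F · x) atTop (𝓝 (g x))) :
    Tendsto (fun n => ρ (fun ω => F n (Z n ω))) atTop (𝓝 (ρ fun ω => g (Zlim ω))) := by
  have hg := IsA0Lip.of_tendsto hF h
  exact hρ _ _ (fun n => (hF n).2.1.comp_memLp (hF n).1 (hZn n)) (hg.2.1.comp_memLp hg.1 hZ) <|
    tendsto_eLpNorm_comp_sub_comp_of_tendsto hp hp' (fun n => (hF n).2.1) (fun n => (hF n).1) h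
      (fun n => (hZn n).1) hZ hZconv

theorem tendsto_allocationCost [IsFiniteMeasure μ] (hp : 1 ≤ p) (hp' : p ≠ ∞)
    (h1 : LpSeqContinuous μ p ρ1) (h2 : LpSeqContinuous μ p ρ2)
    {Z : ℕ → Ω → ℝ} {Zlim : Ω → ℝ} (hZn : ∀ n, MemLp (Z n) p μ) (hZ : MemLp Zlim p μ)
    (hZconv : Tendsto (fun n => eLpNorm (Z n - Zlim) p μ) atTop (𝓝 0))
    {F : ℕ → ℝ → ℝ} {g : ℝ → ℝ} (hF : ∀ n, IsA0Lip (F n))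
    (h : ∀ x, Tendsto (F · x) atTop (𝓝 (g x))) :
    Tendsto (fun n => allocationCost ρ1 ρ2 (Z n) (F n)) atTop
      (𝓝 (allocationCost ρ1 ρ2 Zlim g)) :=
  (h1.tendsto_comp hp hp' hZn hZ hZconv hF h).add <|
    h2.tendsto_comp hp hp' hZn hZ hZconv (fun n => (hF n).id_sub)
      fun x => tendsto_const_nhds.sub (h x)

theorem bddBelow_allocationCost [IsFiniteMeasure μ] (hp : 1 ≤ p) (hp' : p ≠ ∞)
    (h1 : LpSeqContinuous μ p ρ1) (h2 : LpSeqContinuous μ p ρ2) {Z : Ω → ℝ}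
    (hZ : MemLp Z p μ) : BddBelow (allocationCost ρ1 ρ2 Z '' {f | IsA0Lip f}) := by
  by_contra hunbdd
  have hbelow : ∀ k : ℕ, ∃ f, IsA0Lip f ∧ allocationCost ρ1 ρ2 Z f < -k := fun k => by
    obtain ⟨_, ⟨f, hf, rfl⟩, hlt⟩ := not_bddBelow_iff.1 hunbdd (-k)
    exact ⟨f, hf, hlt⟩
  choose F hF hFlt using hbelow
  obtain ⟨g, -, φ, hφ, hlim⟩ := IsA0Lip.exists_subseq_tendsto hF
  have hcost := tendsto_allocationCost hp hp' h1 h2 (fun _ => hZ) hZ (by simp)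
    (fun k => hF (φ k)) hlim
  refine not_tendsto_nhds_of_tendsto_atBot (tendsto_atBot_mono (fun k => ?_)
    (tendsto_neg_atTop_atBot.comp tendsto_natCast_atTop_atTop)) _ hcost
  exact (hFlt (φ k)).le.trans (neg_le_neg (Nat.cast_le.2 hφ.le_apply))

theorem riskSharingValue_le_allocationCost [IsFiniteMeasure μ] (hp : 1 ≤ p) (hp' : p ≠ ∞)
    (h1 : LpSeqContinuous μ p ρ1) (h2 : LpSeqContinuous μ p ρ2) {Z : Ω → ℝ}
    (hZ : MemLp Z p μ) {f : ℝ → ℝ} (hf : IsA0Lip f) :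
    riskSharingValue ρ1 ρ2 Z ≤ allocationCost ρ1 ρ2 Z f := by
  rw [riskSharingValue_eq_sInf]
  exact csInf_le (bddBelow_allocationCost hp hp' h1 h2 hZ) ⟨f, hf, rfl⟩

end RiskSharing

/-- Upper hemicontinuity of the argmin correspondence: if `Z_n → Z` in `L^p`, the
`f̂_n ∈ A⁰_Lip` are minimizers for `Z_n`, and `f̂_n → g` uniformly on every compact set,
then `g ∈ A⁰_Lip` and `g` is a minimizer for `Z`. -/
theorem argmin_locally_uniform_limit_is_argmin
    {Ω : Type*} [MeasurableSpace Ω] (μ : MeasureTheory.Measure Ω) [IsProbabilityMeasure μ]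
    (p : ℝ≥0∞) (hp : 1 ≤ p) (hp_top : p ≠ ∞)
    (ρ1 ρ2 : (Ω → ℝ) → ℝ)
    (h1 : LpSeqContinuous μ p ρ1) (h2 : LpSeqContinuous μ p ρ2)
    (Z : ℕ → Ω → ℝ) (Zlim : Ω → ℝ)
    (hZn : ∀ n, MemLp (Z n) p μ) (hZ : MemLp Zlim p μ)
    (hZconv : Filter.Tendsto (fun n => eLpNorm (Z n - Zlim) p μ) Filter.atTop (nhds 0))
    (fhat : ℕ → ℝ → ℝ) (hfhat : ∀ n, IsA0Lip (fhat n))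
    (hmin : ∀ n, ρ1 (fun ω => fhat n (Z n ω)) + ρ2 (fun ω => Z n ω - fhat n (Z n ω)) =
      riskSharingValue ρ1 ρ2 (Z n))
    (g : ℝ → ℝ)
    (hconv : ∀ K : Set ℝ, IsCompact K →
      TendstoUniformlyOn (fun n => fhat n) g Filter.atTop K) :
    IsA0Lip g ∧
      ρ1 (fun ω => g (Zlim ω)) + ρ2 (fun ω => Zlim ω - g (Zlim ω)) =
        riskSharingValue ρ1 ρ2 Zlim := by
  have hpt : ∀ x, Tendsto (fhat · x) atTop (𝓝 (g x)) := fun x =>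
    (hconv {x} isCompact_singleton).tendsto_at rfl
  have hg := IsA0Lip.of_tendsto hfhat hpt
  have hleast : IsLeast (allocationCost ρ1 ρ2 Zlim '' {f | IsA0Lip f})
      (allocationCost ρ1 ρ2 Zlim g) := by
    refine ⟨⟨g, hg, rfl⟩, ?_⟩
    rintro _ ⟨f, hf, rfl⟩
    exact le_of_tendsto_of_tendsto'
      (tendsto_allocationCost hp hp_top h1 h2 hZn hZ hZconv hfhat hpt)
      (tendsto_allocationCost hp hp_top h1 h2 hZn hZ hZconv (fun _ => hf)
        fun _ => tendsto_const_nhds)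
      fun n => (hmin n).trans_le (riskSharingValue_le_allocationCost hp hp_top h1 h2 (hZn n) hf)
  rw [riskSharingValue_eq_sInf, hleast.csInf_eq]
  exact ⟨hg, rfl⟩
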